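/- arXiv:2002.03508 — 3 statements merged into one kernel-verified Lean document; each statement's English description precedes it below -/
import Mathlib

section
/- For any perfect matching M between the blue vertices and red vertices of a signed complete graph (with equal numbers of red and blue vertices) such that every matched pair lies in the same cluster of a given clustering C, the weight of M is at most twice the number of disagreements of C, where the weight of a matched edge (u,v) is the number of vertices w (other than u,v) such that the edges (u,w) and (v,w) have different signs, plus 1 if (u,v) is negative. -/
open Finset

/-- An edge `{u,v}` is a disagreement of clustering `c`: negative inside a cluster,
or positive between clusters. `sign u v = true` means positive. -/
def isDis {V : Type*} (sign : V → V → Bool) (c : V → ℕ) (u v : V) : Bool :=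
  if c u = c v then !(sign u v) else sign u v

/-- Number of disagreements of a clustering (unordered edges). -/
def numDis {V : Type*} [Fintype V] [DecidableEq V] (sign : V → V → Bool) (c : V → ℕ) : ℕ :=
  ((Finset.univ : Finset (V × V)).filter
    (fun p => p.1 ≠ p.2 ∧ isDis sign c p.1 p.2 = true)).card / 2

/-- Weight of a matched pair `(u,v)`: number of vertices `w ≠ u,v` on which the
signs to `u` and `v` differ, plus `1` if `(u,v)` is negative. -/
def pairW {V : Type*} [Fintype V] [DecidableEq V] (sign : V → V → Bool) (u v : V) : ℕ :=
  ((Finset.univ : Finset V).filter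
    (fun w => w ≠ u ∧ w ≠ v ∧ sign u w ≠ sign v w)).card
  + (if sign u v = false then 1 else 0)

/-
Each edge `(b, f b)` of the matching is charged to the disagreements at its two endpoints.
Since `b` and `f b` lie in the same cluster, a vertex `w` seeing them with different signs makes
exactly one of `bw`, `(f b)w` a disagreement, and a negative edge `b (f b)` is itself one. So the
weight of `(b, f b)` is at most the sum of the disagreement degrees of `b` and `f b`. The matched
pairs are disjoint, so summing over the matching gives at most the degree sum of the disagreement
graph, which is twice the number of disagreements.
-/

section Disagreement

variable {V : Type*} (sign : V → V → Bool) (c : V → ℕ)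

lemma isDis_comm (hsym : ∀ u v, sign u v = sign v u) (u v : V) :
    isDis sign c u v = isDis sign c v u := by
  simp only [isDis, hsym u v, eq_comm (a := c u)]

lemma isDis_of_sign_eq_false {u v : V} (hc : c u = c v) (hs : sign u v = false) :
    isDis sign c u v = true := by
  simp [isDis, hc, hs]

lemma isDis_or_isDis_of_sign_ne {u v w : V} (hc : c u = c v) (hs : sign u w ≠ sign v w) :
    isDis sign c u w = true ∨ isDis sign c v w = true := by
  unfold isDis
  rw [hc]
  revert hs
  split_ifs <;> cases sign u w <;> cases sign v w <;> simp

def disGraph (hsym : ∀ u v, sign u v = sign v u) : SimpleGraph V where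
  Adj u v := u ≠ v ∧ isDis sign c u v = true
  symm := ⟨fun u v h => ⟨h.1.symm, isDis_comm sign c hsym u v ▸ h.2⟩⟩
  loopless := ⟨fun _ h => h.1 rfl⟩

variable (hsym : ∀ u v, sign u v = sign v u)

@[simp]
lemma disGraph_adj {u v : V} : (disGraph sign c hsym).Adj u v ↔ u ≠ v ∧ isDis sign c u v = true :=
  Iff.rfl

instance [DecidableEq V] : DecidableRel (disGraph sign c hsym).Adj :=
  fun _ _ => inferInstanceAs (Decidable (_ ∧ _))

variable [Fintype V] [DecidableEq V]

lemma card_disPairs_eq_sum_degree :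
    #{p : V × V | p.1 ≠ p.2 ∧ isDis sign c p.1 p.2 = true}
      = ∑ x, (disGraph sign c hsym).degree x := by
  simp only [card_filter, Fintype.sum_prod_type, ← SimpleGraph.card_neighborFinset_eq_degree,
    SimpleGraph.neighborFinset_eq_filter]
  rfl

lemma two_mul_numDis : 2 * numDis sign c = ∑ x, (disGraph sign c hsym).degree x := by
  rw [numDis, card_disPairs_eq_sum_degree sign c hsym, SimpleGraph.sum_degrees_eq_twice_card_edges,
    Nat.mul_div_cancel_left _ two_pos]

lemma pairW_le_degree_add_degree {u v : V} (huv : u ≠ v) (hc : c u = c v) :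
    pairW sign u v ≤ (disGraph sign c hsym).degree u + (disGraph sign c hsym).degree v := by
  set G := disGraph sign c hsym
  set W := ({w | w ≠ u ∧ w ≠ v ∧ sign u w ≠ sign v w} : Finset V)
  have hW : W ⊆ G.neighborFinset u ∪ G.neighborFinset v := by
    intro w hw
    obtain ⟨hwu, hwv, hs⟩ := (mem_filter.1 hw).2
    simpa [G, Ne.symm hwu, Ne.symm hwv] using isDis_or_isDis_of_sign_ne sign c hc hs
  have hunion := card_union_le (G.neighborFinset u) (G.neighborFinset v)
  rw [G.card_neighborFinset_eq_degree, G.card_neighborFinset_eq_degree] at hunion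
  rw [pairW]
  split_ifs with hs
  · have hvW : v ∉ W := by simp [W]
    have hv : v ∈ G.neighborFinset u := by
      simpa [G, huv] using isDis_of_sign_eq_false sign c hc hs
    rw [← card_insert_of_notMem hvW]
    exact (card_le_card (insert_subset (mem_union_left _ hv) hW)).trans hunion
  · exact (card_le_card hW).trans hunion

end Disagreement

lemma sum_add_comp_le_univ_sum {α M : Type*} [Fintype α] [DecidableEq α] [AddCommMonoid M]
    [PartialOrder M] [IsOrderedAddMonoid M] {g : α → M} (hg : ∀ x, 0 ≤ g x) {s : Finset α}
    {f : α → α} (hf : Set.InjOn f s) (hdisj : Disjoint s (s.image f)) :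
    ∑ b ∈ s, (g b + g (f b)) ≤ ∑ x, g x := by
  rw [sum_add_distrib, ← sum_image hf, ← sum_union hdisj]
  exact sum_le_univ_sum_of_nonneg hg

theorem stmt0_general {V : Type*} [Fintype V] [DecidableEq V]
    (sign : V → V → Bool) (hsym : ∀ u v, sign u v = sign v u)
    (col : V → Bool)  -- true = red, false = blue
    (c : V → ℕ)
    (f : V → V)
    (hfcol : ∀ b, col b = false → col (f b) = true)
    (hinj : ∀ b b', col b = false → col b' = false → f b = f b' → b = b')
    (hsame : ∀ b, col b = false → c (f b) = c b) :
    ∑ b ∈ univ.filter (fun v => col v = false), pairW sign b (f b)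
      ≤ 2 * numDis sign c := by
  set blue := univ.filter fun v => col v = false
  set G := disGraph sign c hsym
  have hdisj : Disjoint blue (blue.image f) := by
    simp only [blue, disjoint_left, mem_image, mem_filter, mem_univ, true_and]
    rintro _ hr ⟨b, hb, rfl⟩
    simp [hfcol b hb] at hr
  have hinjOn : Set.InjOn f blue := fun b hb b' hb' =>
    hinj b b' (mem_filter.1 hb).2 (mem_filter.1 hb').2
  calc ∑ b ∈ blue, pairW sign b (f b)
      ≤ ∑ b ∈ blue, (G.degree b + G.degree (f b)) := by
        refine sum_le_sum fun b hb => pairW_le_degree_add_degree sign c hsym ?_ ?_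
        · exact disjoint_left.1 hdisj hb ∘ (· ▸ mem_image_of_mem f hb)
        · exact (hsame b (mem_filter.1 hb).2).symm
    _ ≤ ∑ x, G.degree x := sum_add_comp_le_univ_sum (fun _ => Nat.zero_le _) hinjOn hdisj
    _ = 2 * numDis sign c := (two_mul_numDis sign c hsym).symm

/-- any perfect matching between blue and red vertices whose matched
pairs share clusters has weight at most twice the number of disagreements. -/
theorem stmt0 {V : Type*} [Fintype V] [DecidableEq V]
    (sign : V → V → Bool) (hsym : ∀ u v, sign u v = sign v u)
    (col : V → Bool)  -- true = red, false = blue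
    (hbal : (univ.filter fun v => col v = false).card
          = (univ.filter fun v => col v = true).card)
    (c : V → ℕ)
    (f : V → V)
    (hfcol : ∀ b, col b = false → col (f b) = true)
    (hinj : ∀ b b', col b = false → col b' = false → f b = f b' → b = b')
    (hsurj : ∀ r, col r = true → ∃ b, col b = false ∧ f b = r)
    (hsame : ∀ b, col b = false → c (f b) = c b) :
    ∑ b ∈ univ.filter (fun v => col v = false), pairW sign b (f b)
      ≤ 2 * numDis sign c :=
  stmt0_general sign hsym col c f hfcol hinj hsame
end

section
/- Let G be a signed complete graph whose vertices are colored red or blue, with (number of blue) = p · (number of red) for a positive integer p. For any clustering C in which each cluster contains exactly p times as many blue vertices as red vertices, there exists a b-matching M from blue to red vertices (each red vertex matched to exactly p blue vertices, each blue vertex matched to exactly one red vertex) such that every matched pair lies in the same cluster of C, and the weight of M is at most 2p times the number of disagreements of C. -/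
open Finset

lemma count_div (p n i : ℕ) (hp : 0 < p) (hi : i < n) :
    ((Finset.range (p * n)).filter (fun j => j / p = i)).card = p := by
  have : (Finset.range (p * n)).filter (fun j => j / p = i) = Finset.Ico (i * p) (i * p + p) := by
    ext j
    simp only [mem_filter, mem_range, mem_Ico]
    constructor
    · rintro ⟨hj, rfl⟩
      exact ⟨Nat.div_mul_le_self j p, Nat.lt_div_mul_add hp⟩
    · rintro ⟨h1, h2⟩
      refine ⟨?_, ?_⟩
      · calc j < i * p + p := h2
          _ = (i+1) * p := by ring
          _ ≤ n * p := Nat.mul_le_mul_right p hi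
          _ = p * n := Nat.mul_comm _ _
      · have := Nat.div_le_div_right (c := p) h1
        have h3 := Nat.div_le_div_right (c := p) (Nat.le_of_lt_succ (by omega : j < (i*p + p - 1) + 1))
        have e1 : i * p / p = i := Nat.mul_div_cancel i hp
        have e2 : (i * p + p - 1) / p = i := by
          rcases Nat.exists_eq_add_of_le hp with ⟨q, hq⟩
          have : i * p + p - 1 = i * p + q := by omega
          rw [this, Nat.add_comm (i*p) q, Nat.add_mul_div_right q i hp,
            Nat.div_eq_of_lt (by omega), Nat.zero_add]
        omega
  rw [this, Nat.card_Ico]; omega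

lemma exists_bfun {V : Type*} [Fintype V] [DecidableEq V] (p : ℕ) (hp : 0 < p)
    (B R : Finset V) (h : B.card = p * R.card) :
    ∃ g : V → V, (∀ b ∈ B, g b ∈ R) ∧ ∀ r ∈ R, (B.filter (fun b => g b = r)).card = p := by
  classical
  have eB : ↥B ≃ Fin (p * R.card) := Fintype.equivFinOfCardEq (by rw [Fintype.card_coe, h])
  have eR : ↥R ≃ Fin R.card := Fintype.equivFinOfCardEq (Fintype.card_coe R)
  have hbd : ∀ (j : Fin (p * R.card)), (j : ℕ) / p < R.card := fun j =>
    (Nat.div_lt_iff_lt_mul hp).mpr (lt_of_lt_of_eq j.isLt (Nat.mul_comm p R.card))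
  set g : V → V := fun v =>
    if hv : v ∈ B then ((eR.symm ⟨(eB ⟨v, hv⟩ : Fin _).val / p, hbd _⟩ : ↥R) : V) else v with hg
  have hmem : ∀ b ∈ B, g b ∈ R := by
    intro b hb
    simp only [hg, dif_pos hb]
    exact Subtype.coe_prop _
  refine ⟨g, hmem, ?_⟩
  intro r hr
  set i : Fin R.card := eR ⟨r, hr⟩ with hi
  have key : ∀ b (hb : b ∈ B), g b = r ↔ ((eB ⟨b, hb⟩ : Fin _) : ℕ) / p = (i : ℕ) := by
    intro b hb
    simp only [hg, dif_pos hb]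
    constructor
    · intro hgb
      have : (eR.symm ⟨(eB ⟨b, hb⟩ : Fin _).val / p, hbd _⟩ : ↥R) = ⟨r, hr⟩ :=
        Subtype.coe_injective hgb
      have := congrArg eR this
      rw [Equiv.apply_symm_apply] at this
      rw [← hi] at this
      exact congrArg Fin.val this
    · intro hv
      have : (⟨(eB ⟨b, hb⟩ : Fin _).val / p, hbd _⟩ : Fin R.card) = i := Fin.ext hv
      rw [this, hi, Equiv.symm_apply_apply]
  have := Finset.card_bij
    (i := fun b (hb : b ∈ B.filter (fun b => g b = r)) =>
      ((eB ⟨b, (Finset.mem_filter.mp hb).1⟩ : Fin _) : ℕ))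
    (s := B.filter (fun b => g b = r))
    (t := (Finset.range (p * R.card)).filter (fun j => j / p = (i : ℕ)))
    (by
      intro b hb
      rcases Finset.mem_filter.mp hb with ⟨hb1, hb2⟩
      refine Finset.mem_filter.mpr ⟨Finset.mem_range.mpr (Fin.isLt _), ?_⟩
      exact (key b hb1).mp hb2)
    (by
      intro a ha b hb hab
      have : (⟨a, (Finset.mem_filter.mp ha).1⟩ : ↥B) = ⟨b, (Finset.mem_filter.mp hb).1⟩ :=
        eB.injective (Fin.ext hab)
      exact congrArg Subtype.val this)
    (by
      intro j hj
      rcases Finset.mem_filter.mp hj with ⟨hj1, hj2⟩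
      have hjlt := Finset.mem_range.mp hj1
      refine ⟨((eB.symm ⟨j, hjlt⟩ : ↥B) : V), ?_, ?_⟩
      · refine Finset.mem_filter.mpr ⟨Subtype.coe_prop _, ?_⟩
        refine (key _ (Subtype.coe_prop _)).mpr ?_
        have : (⟨((eB.symm ⟨j, hjlt⟩ : ↥B) : V), Subtype.coe_prop _⟩ : ↥B) = eB.symm ⟨j, hjlt⟩ :=
          Subtype.ext rfl
        rw [this, Equiv.apply_symm_apply]
        exact hj2
      · simp only [Subtype.coe_eta, Equiv.apply_symm_apply])
  rw [this, count_div p R.card (i : ℕ) hp i.isLt]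

lemma isDis_symm {V : Type*} (sign : V → V → Bool) (hsym : ∀ u v, sign u v = sign v u)
    (c : V → ℕ) (u v : V) : isDis sign c u v = isDis sign c v u := by
  unfold isDis
  rw [hsym]
  by_cases h : c u = c v
  · rw [if_pos h, if_pos h.symm]
  · rw [if_neg h, if_neg (fun hh => h hh.symm)]

lemma dis_other {V : Type*} (sign : V → V → Bool) (c : V → ℕ) (b r w : V)
    (hcr : c r = c b) (hne : sign b w ≠ sign r w)
    (hnb : ¬ isDis sign c b w = true) : isDis sign c r w = true := by
  unfold isDis at *
  by_cases h : c b = c w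
  · rw [if_pos h] at hnb
    rw [if_pos (hcr.trans h)]
    cases hbw : sign b w <;> cases hrw : sign r w <;> simp_all
  · rw [if_neg h] at hnb
    rw [if_neg (fun hh => h (hcr ▸ hh))]
    cases hbw : sign b w <;> cases hrw : sign r w <;> simp_all

/-- for a clustering where each cluster has blue = p · red, there is a
b-matching (each red matched to exactly p blues, each blue once) with matched
pairs inside clusters, of weight at most 2p times the disagreements. -/
theorem stmt1 {V : Type*} [Fintype V] [DecidableEq V]
    (sign : V → V → Bool) (hsym : ∀ u v, sign u v = sign v u)
    (col : V → Bool) (p : ℕ) (hp : 1 ≤ p)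
    (hglob : (univ.filter fun v => col v = false).card
           = p * (univ.filter fun v => col v = true).card)
    (c : V → ℕ)
    (hfair : ∀ k, (univ.filter fun v => col v = false ∧ c v = k).card
           = p * (univ.filter fun v => col v = true ∧ c v = k).card) :
    ∃ f : V → V,
      (∀ b, col b = false → col (f b) = true) ∧
      (∀ r, col r = true → (univ.filter fun b => col b = false ∧ f b = r).card = p) ∧
      (∀ b, col b = false → c (f b) = c b) ∧
      ∑ b ∈ univ.filter (fun v => col v = false), pairW sign b (f b)
        ≤ 2 * p * numDis sign c := by
  classical
  choose g hg1 hg2 using fun k => exists_bfun p hp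
    (univ.filter fun v => col v = false ∧ c v = k)
    (univ.filter fun v => col v = true ∧ c v = k) (hfair k)
  set f : V → V := fun v => if col v = false then g (c v) v else v with hf
  have hfb : ∀ b, col b = false → f b = g (c b) b := by
    intro b hb; simp only [hf, if_pos hb]
  have hmemR : ∀ b, col b = false → col (f b) = true ∧ c (f b) = c b := by
    intro b hb
    rw [hfb b hb]
    have hbB : b ∈ univ.filter fun v => col v = false ∧ c v = c b :=
      mem_filter.mpr ⟨mem_univ _, hb, rfl⟩
    have := hg1 (c b) b hbB
    exact (mem_filter.mp this).2
  have hcol : ∀ b, col b = false → col (f b) = true := fun b hb => (hmemR b hb).1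
  have hclu : ∀ b, col b = false → c (f b) = c b := fun b hb => (hmemR b hb).2
  have hcnt : ∀ r, col r = true → (univ.filter fun b => col b = false ∧ f b = r).card = p := by
    intro r hr
    have hrR : r ∈ univ.filter fun v => col v = true ∧ c v = c r :=
      mem_filter.mpr ⟨mem_univ _, hr, rfl⟩
    have heq : (univ.filter fun b => col b = false ∧ f b = r)
        = (univ.filter fun v => col v = false ∧ c v = c r).filter (fun b => g (c r) b = r) := by
      ext b
      simp only [mem_filter, mem_univ, true_and]
      constructor
      · rintro ⟨hb, hfbr⟩
        have hcb : c (f b) = c b := hclu b hb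
        rw [hfbr] at hcb
        exact ⟨⟨hb, hcb.symm⟩, by rw [hcb, ← hfb b hb]; exact hfbr⟩
      · rintro ⟨⟨hb, hcb⟩, hgbr⟩
        exact ⟨hb, by rw [hfb b hb, hcb, hgbr]⟩
    rw [heq]
    exact hg2 (c r) r hrR
  refine ⟨f, hcol, hcnt, hclu, ?_⟩
  -- the weight bound
  set S : Finset (V × V) := (Finset.univ : Finset (V × V)).filter
    (fun q => q.1 ≠ q.2 ∧ isDis sign c q.1 q.2 = true) with hS
  have hnum : numDis sign c = S.card / 2 := rfl
  -- S has even cardinality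
  have heven : 2 ∣ S.card := by
    have hz : (∑ _q ∈ S, (1 : ZMod 2)) = 0 := by
      refine Finset.sum_involution (fun q _ => (q.2, q.1)) (fun q hq => by decide)
        (fun q hq h1 => ?_) (fun q hq => ?_) (fun q hq => rfl)
      · rcases mem_filter.mp hq with ⟨-, hne, -⟩
        intro hswap
        exact hne (by simpa using congrArg Prod.snd hswap)
      · rcases mem_filter.mp hq with ⟨-, hne, hd⟩
        refine mem_filter.mpr ⟨mem_univ _, fun h => hne h.symm, ?_⟩
        rw [← isDis_symm sign hsym c]
        exact hd
    rw [Finset.sum_const, nsmul_eq_mul, mul_one] at hz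
    exact (ZMod.natCast_eq_zero_iff _ 2).mp hz
  have hS2 : 2 * (S.card / 2) = S.card := Nat.mul_div_cancel' heven
  -- the charging relation
  set Ch : V → V × V → Prop := fun b q =>
    (q.1 = b ∧ q.2 = f b) ∨
    (q.2 ≠ b ∧ q.2 ≠ f b ∧ sign b q.2 ≠ sign (f b) q.2 ∧
      q.1 = if isDis sign c b q.2 = true then b else f b) with hCh
  -- step A : pairW bound per blue vertex
  have stepA : ∀ b ∈ univ.filter (fun v => col v = false),
      pairW sign b (f b) ≤ (S.filter (fun q => Ch b q)).card := by
    intro b hbm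
    have hb : col b = false := (mem_filter.mp hbm).2
    set r := f b with hr
    have hcr : c r = c b := hclu b hb
    have hbr : b ≠ r := by
      intro h
      have h2 := hcol b hb
      rw [hr] at h
      rw [← h, hb] at h2
      exact Bool.false_ne_true h2
    set W : Finset V := univ.filter (fun w => w ≠ b ∧ w ≠ r ∧ sign b w ≠ sign r w) with hW
    set A : Finset (V × V) :=
      W.image (fun w => ((if isDis sign c b w = true then b else r), w)) with hA
    have cardA : A.card = W.card :=
      Finset.card_image_of_injOn (fun w _ w' _ h => congrArg Prod.snd h)
    have hAsub : A ⊆ S.filter (fun q => Ch b q) := by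
      intro q hq
      rcases Finset.mem_image.mp hq with ⟨w, hw, rfl⟩
      rcases mem_filter.mp hw with ⟨-, hwb, hwr, hsgn⟩
      have hdis : isDis sign c (if isDis sign c b w = true then b else r) w = true := by
        by_cases hd : isDis sign c b w = true
        · rw [if_pos hd]; exact hd
        · rw [if_neg hd]; exact dis_other sign c b r w hcr hsgn hd
      refine mem_filter.mpr ⟨mem_filter.mpr ⟨mem_univ _, ?_, hdis⟩, ?_⟩
      · by_cases hd : isDis sign c b w = true
        · rw [if_pos hd]; exact fun h => hwb h.symm
        · rw [if_neg hd]; exact fun h => hwr h.symm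
      · exact Or.inr ⟨hwb, hwr, hsgn, rfl⟩
    have hpw : pairW sign b r = W.card + (if sign b r = false then 1 else 0) := rfl
    by_cases hneg : sign b r = false
    · have hbrS : (b, r) ∈ S.filter (fun q => Ch b q) := by
        refine mem_filter.mpr ⟨mem_filter.mpr ⟨mem_univ _, hbr, ?_⟩, Or.inl ⟨rfl, rfl⟩⟩
        unfold isDis
        rw [if_pos hcr.symm, hneg]
        rfl
      have hbrA : (b, r) ∉ A := by
        intro h
        rcases Finset.mem_image.mp h with ⟨w, hw, hweq⟩
        rcases mem_filter.mp hw with ⟨-, -, hwr, -⟩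
        exact hwr (congrArg Prod.snd hweq)
      calc pairW sign b r = W.card + 1 := by rw [hpw, if_pos hneg]
        _ = A.card + 1 := by rw [cardA]
        _ = (insert (b, r) A).card := (Finset.card_insert_of_notMem hbrA).symm
        _ ≤ (S.filter (fun q => Ch b q)).card := Finset.card_le_card
            (Finset.insert_subset hbrS hAsub)
    · calc pairW sign b r = W.card := by rw [hpw, if_neg hneg]; omega
        _ = A.card := cardA.symm
        _ ≤ (S.filter (fun q => Ch b q)).card := Finset.card_le_card hAsub
  -- step B : total charge bound
  have stepB : ∑ b ∈ univ.filter (fun v => col v = false), (S.filter (fun q => Ch b q)).card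
      ≤ S.card * p := by
    have hswap : ∑ b ∈ univ.filter (fun v => col v = false), (S.filter (fun q => Ch b q)).card
        = ∑ q ∈ S, ((univ.filter (fun v => col v = false)).filter (fun b => Ch b q)).card := by
      simp only [Finset.card_filter]
      exact Finset.sum_comm
    rw [hswap]
    have hperq : ∀ q ∈ S,
        ((univ.filter (fun v => col v = false)).filter (fun b => Ch b q)).card ≤ p := by
      intro q hq
      cases hq1 : col q.1
      · -- q.1 is blue : at most one charger, namely q.1
        have hsub : (univ.filter (fun v => col v = false)).filter (fun b => Ch b q) ⊆ {q.1} := by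
          intro b hbm
          rcases mem_filter.mp hbm with ⟨hbm1, hch⟩
          have hb : col b = false := (mem_filter.mp hbm1).2
          rcases hch with ⟨h1, -⟩ | ⟨-, -, -, h4⟩
          · exact Finset.mem_singleton.mpr h1.symm
          · by_cases hd : isDis sign c b q.2 = true
            · rw [if_pos hd] at h4; exact Finset.mem_singleton.mpr h4.symm
            · rw [if_neg hd] at h4
              exfalso
              have := hcol b hb
              rw [← h4, hq1] at this
              exact Bool.false_ne_true this
        calc _ ≤ ({q.1} : Finset V).card := Finset.card_le_card hsub
          _ = 1 := Finset.card_singleton _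
          _ ≤ p := hp
      · -- q.1 is red : chargers have f b = q.1, exactly p of them
        have hsub : (univ.filter (fun v => col v = false)).filter (fun b => Ch b q)
            ⊆ univ.filter (fun b => col b = false ∧ f b = q.1) := by
          intro b hbm
          rcases mem_filter.mp hbm with ⟨hbm1, hch⟩
          have hb : col b = false := (mem_filter.mp hbm1).2
          refine mem_filter.mpr ⟨mem_univ _, hb, ?_⟩
          rcases hch with ⟨h1, -⟩ | ⟨-, -, -, h4⟩
          · exfalso; rw [h1, hb] at hq1; exact Bool.false_ne_true hq1
          · by_cases hd : isDis sign c b q.2 = true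
            · rw [if_pos hd] at h4
              exfalso; rw [h4, hb] at hq1; exact Bool.false_ne_true hq1
            · rw [if_neg hd] at h4; exact h4.symm
        calc _ ≤ (univ.filter (fun b => col b = false ∧ f b = q.1)).card :=
              Finset.card_le_card hsub
          _ = p := hcnt q.1 hq1
    calc ∑ q ∈ S, ((univ.filter (fun v => col v = false)).filter (fun b => Ch b q)).card
        ≤ ∑ _q ∈ S, p := Finset.sum_le_sum hperq
      _ = S.card * p := by rw [Finset.sum_const, smul_eq_mul]
  calc ∑ b ∈ univ.filter (fun v => col v = false), pairW sign b (f b)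
      ≤ ∑ b ∈ univ.filter (fun v => col v = false), (S.filter (fun q => Ch b q)).card :=
        Finset.sum_le_sum stepA
    _ ≤ S.card * p := stepB
    _ = 2 * p * numDis sign c := by
        rw [hnum, Nat.mul_comm 2 p, Nat.mul_assoc, hS2, Nat.mul_comm]
end

section
/- Let G be a signed complete graph with red and blue vertices, and C a clustering where the ratio of red to blue vertices in each cluster is between 1:q and 1:p (i.e., in each cluster with n_r red and n_b blue vertices, p·n_r ≤ n_b ≤ q·n_r), where 1 ≤ p ≤ q are integers. Then there exists a b-matching from blue to red vertices in which every blue vertex is matched to exactly one red vertex, every red vertex is matched to at least p and at most q blue vertices, every matched pair lies in the same cluster, and the weight of the b-matching is at most 2q times the number of disagreements of C. -/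
open Finset

def disAt {V : Type*} [Fintype V] [DecidableEq V] (sign : V → V → Bool) (c : V → ℕ) (v : V) : ℕ :=
  ((Finset.univ : Finset V).filter (fun w => v ≠ w ∧ isDis sign c v w = true)).card

lemma isDis_or {V : Type*} (sign : V → V → Bool) (c : V → ℕ) (b r w : V)
    (hbr : c b = c r) (hw : sign b w ≠ sign r w) :
    isDis sign c b w = true ∨ isDis sign c r w = true := by
  unfold isDis
  by_cases h : c b = c w
  · rw [if_pos h, if_pos (hbr ▸ h)]
    cases hbw : sign b w <;> cases hrw : sign r w <;> simp_all
  · rw [if_neg h, if_neg (fun hh => h (hbr ▸ hh))]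
    cases hbw : sign b w <;> cases hrw : sign r w <;> simp_all

lemma pairW_le_dis {V : Type*} [Fintype V] [DecidableEq V]
    (sign : V → V → Bool) (c : V → ℕ) (b r : V)
    (hbr : c b = c r) (hne : b ≠ r) :
    pairW sign b r ≤ disAt sign c b + disAt sign c r := by
  classical
  set W : Finset V := univ.filter (fun w => w ≠ b ∧ w ≠ r ∧ sign b w ≠ sign r w) with hW
  set Wb : Finset V := W.filter (fun w => isDis sign c b w = true) with hWb
  set Wr : Finset V := W.filter (fun w => isDis sign c r w = true) with hWr
  set Db : Finset V := univ.filter (fun w => b ≠ w ∧ isDis sign c b w = true) with hDb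
  set Dr : Finset V := univ.filter (fun w => r ≠ w ∧ isDis sign c r w = true) with hDr
  have hWsub : W ⊆ Wb ∪ Wr := by
    intro w hw
    have hw' := Finset.mem_filter.mp hw
    rcases isDis_or sign c b r w hbr hw'.2.2.2 with h | h
    · exact Finset.mem_union_left _ (Finset.mem_filter.mpr ⟨hw, h⟩)
    · exact Finset.mem_union_right _ (Finset.mem_filter.mpr ⟨hw, h⟩)
  have hcards : W.card ≤ Wb.card + Wr.card :=
    le_trans (Finset.card_le_card hWsub) (Finset.card_union_le _ _)
  have hWbsub : Wb ⊆ Db := by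
    intro w hw
    have h1 := Finset.mem_filter.mp hw
    have h2 := Finset.mem_filter.mp h1.1
    exact Finset.mem_filter.mpr ⟨Finset.mem_univ _, Ne.symm h2.2.1, h1.2⟩
  have hWrsub : Wr ⊆ Dr := by
    intro w hw
    have h1 := Finset.mem_filter.mp hw
    have h2 := Finset.mem_filter.mp h1.1
    exact Finset.mem_filter.mpr ⟨Finset.mem_univ _, Ne.symm h2.2.2.1, h1.2⟩
  have hmain : Wb.card + (if sign b r = false then 1 else 0) ≤ Db.card := by
    by_cases hneg : sign b r = false
    · rw [if_pos hneg]
      have hrDb : r ∈ Db := by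
        refine Finset.mem_filter.mpr ⟨Finset.mem_univ _, hne, ?_⟩
        unfold isDis
        rw [if_pos hbr, hneg]
        rfl
      have hrWb : r ∉ Wb := by
        intro h
        have := (Finset.mem_filter.mp (Finset.mem_filter.mp h).1).2.2.1
        exact this rfl
      have : Wb ⊂ Db := (Finset.ssubset_iff_of_subset hWbsub).mpr ⟨r, hrDb, hrWb⟩
      exact Nat.succ_le_of_lt (Finset.card_lt_card this)
    · rw [if_neg hneg]
      exact Finset.card_le_card hWbsub
  calc pairW sign b r = W.card + (if sign b r = false then 1 else 0) := rfl
    _ ≤ (Wb.card + (if sign b r = false then 1 else 0)) + Wr.card := by omega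
    _ ≤ Db.card + Dr.card := Nat.add_le_add hmain (Finset.card_le_card hWrsub)

lemma sum_disAt {V : Type*} [Fintype V] [DecidableEq V]
    (sign : V → V → Bool) (c : V → ℕ) :
    ∑ v, disAt sign c v =
      ((Finset.univ : Finset (V × V)).filter
        (fun p => p.1 ≠ p.2 ∧ isDis sign c p.1 p.2 = true)).card := by
  classical
  rw [Finset.card_filter, ← Finset.univ_product_univ, Finset.sum_product]
  refine Finset.sum_congr rfl (fun v _ => ?_)
  rw [disAt, Finset.card_filter]

lemma even_card_of_swap {V : Type*} [Fintype V] [DecidableEq V] (S : Finset (V × V))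
    (hs : ∀ p ∈ S, Prod.swap p ∈ S) (hne : ∀ p ∈ S, p.1 ≠ p.2) : Even S.card := by
  classical
  let e := Fintype.equivFin V
  set T := S.filter (fun p => (e p.1 : ℕ) < e p.2) with hT
  have hunion : S = T ∪ T.image Prod.swap := by
    ext p
    simp only [Finset.mem_union, Finset.mem_image, Finset.mem_filter, hT]
    constructor
    · intro hp
      rcases lt_trichotomy ((e p.1 : ℕ)) (e p.2) with h | h | h
      · exact Or.inl ⟨hp, h⟩
      · exact absurd (e.injective (Fin.val_injective h)) (hne p hp)
      · exact Or.inr ⟨p.swap, ⟨hs p hp, h⟩, Prod.swap_swap p⟩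
    · rintro (⟨hp, _⟩ | ⟨q, ⟨hq, _⟩, rfl⟩)
      · exact hp
      · exact hs q hq
  have hdisj : Disjoint T (T.image Prod.swap) := by
    rw [Finset.disjoint_left]
    rintro p hp hp'
    rcases Finset.mem_image.mp hp' with ⟨q, hq, rfl⟩
    have h1 := (Finset.mem_filter.mp hp).2
    have h2 := (Finset.mem_filter.mp hq).2
    simp only [Prod.fst_swap, Prod.snd_swap] at h1
    omega
  rw [hunion, Finset.card_union_of_disjoint hdisj,
    Finset.card_image_of_injective _ Prod.swap_injective]
  exact ⟨T.card, rfl⟩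
lemma count_mod_lower (m n p j : ℕ) (hj : j < n) (h1 : p * n ≤ m) :
    p ≤ ((Finset.range m).filter (fun i => i % n = j)).card := by
  have hn : 0 < n := Nat.pos_of_ne_zero (by omega)
  have hinj : Function.Injective (fun t : ℕ => t * n + j) := by
    intro a b h
    simp only at h
    have : a * n = b * n := by omega
    exact Nat.eq_of_mul_eq_mul_right hn this
  have hsub : (Finset.range p).image (fun t => t * n + j) ⊆
      (Finset.range m).filter (fun i => i % n = j) := by
    intro x hx
    rcases Finset.mem_image.mp hx with ⟨t, ht, rfl⟩
    have ht' : t < p := Finset.mem_range.mp ht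
    have h2 : t * n + j < m := by
      have : (t + 1) * n ≤ p * n := Nat.mul_le_mul_right n (by omega)
      have : t * n + n ≤ p * n := by nlinarith
      omega
    refine Finset.mem_filter.mpr ⟨Finset.mem_range.mpr h2, ?_⟩
    rw [Nat.add_comm, Nat.add_mul_mod_self_right, Nat.mod_eq_of_lt hj]
  calc p = ((Finset.range p).image (fun t => t * n + j)).card := by
        rw [Finset.card_image_of_injective _ hinj, Finset.card_range]
    _ ≤ _ := Finset.card_le_card hsub

lemma count_mod_upper (m n q j : ℕ) (hn : 0 < n) (h2 : m ≤ q * n) :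
    ((Finset.range m).filter (fun i => i % n = j)).card ≤ q := by
  have := Finset.card_le_card_of_injOn (fun i => i / n)
    (s := (Finset.range m).filter (fun i => i % n = j)) (t := Finset.range q)
    (by
      intro i hi
      have hi' : i < m := Finset.mem_range.mp (Finset.mem_filter.mp hi).1
      exact Finset.mem_range.mpr ((Nat.div_lt_iff_lt_mul hn).mpr (by omega)))
    (by
      intro a ha b hb hab
      have ha' := (Finset.mem_filter.mp ha).2
      have hb' := (Finset.mem_filter.mp hb).2
      have e1 := Nat.div_add_mod a n
      have e2 := Nat.div_add_mod b n
      simp only at hab ha' hb'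
      rw [hab] at e1
      omega)
  simpa using this

lemma exists_assignment {V : Type*} [DecidableEq V] (p q : ℕ)
    (B R : Finset V) (h1 : p * R.card ≤ B.card) (h2 : B.card ≤ q * R.card) :
    ∃ g : V → V, (∀ b ∈ B, g b ∈ R) ∧
      ∀ r ∈ R, p ≤ (B.filter fun b => g b = r).card ∧ (B.filter fun b => g b = r).card ≤ q := by
  classical
  rcases Nat.eq_zero_or_pos R.card with h0 | hn
  · have hR : R = ∅ := Finset.card_eq_zero.mp h0
    have hB : B = ∅ := Finset.card_eq_zero.mp (by simpa [h0] using h2)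
    refine ⟨id, ?_, ?_⟩ <;> simp [hR, hB]
  · refine ⟨fun v => if h : v ∈ B then
      ((R.equivFin.symm ⟨(B.equivFin ⟨v, h⟩ : Fin B.card).val % R.card,
        Nat.mod_lt _ hn⟩ : {x // x ∈ R}) : V) else v, ?_, ?_⟩
    · intro b hb
      simp only [dif_pos hb]
      exact (R.equivFin.symm _).2
    · intro r hr
      set j : ℕ := (R.equivFin ⟨r, hr⟩ : Fin R.card).val with hjdef
      have hj : j < R.card := (R.equivFin ⟨r, hr⟩).isLt
      have key : ∀ b (hb : b ∈ B),
          ((R.equivFin.symm ⟨(B.equivFin ⟨b, hb⟩ : Fin B.card).val % R.card,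
            Nat.mod_lt _ hn⟩ : {x // x ∈ R}) : V) = r ↔
          (B.equivFin ⟨b, hb⟩ : Fin B.card).val % R.card = j := by
        intro b hb
        rw [show (((R.equivFin.symm ⟨(B.equivFin ⟨b, hb⟩ : Fin B.card).val % R.card,
            Nat.mod_lt _ hn⟩ : {x // x ∈ R}) : V) = r) ↔
            (R.equivFin.symm ⟨(B.equivFin ⟨b, hb⟩ : Fin B.card).val % R.card,
            Nat.mod_lt _ hn⟩ = (⟨r, hr⟩ : {x // x ∈ R})) from
          ⟨fun h => Subtype.ext h, fun h => congrArg Subtype.val h⟩]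
        rw [Equiv.symm_apply_eq, Fin.ext_iff]
      have hcard : (B.filter fun b => (if h : b ∈ B then
          ((R.equivFin.symm ⟨(B.equivFin ⟨b, h⟩ : Fin B.card).val % R.card,
            Nat.mod_lt _ hn⟩ : {x // x ∈ R}) : V) else b) = r).card
          = ((Finset.range B.card).filter (fun i => i % R.card = j)).card := by
        refine Finset.card_bij'
          (i := fun b hb => (B.equivFin ⟨b, (Finset.mem_filter.mp hb).1⟩ : Fin B.card).val)
          (j := fun i hi => ((B.equivFin.symm ⟨i, Finset.mem_range.mp (Finset.mem_filter.mp hi).1⟩ : {x // x ∈ B}) : V))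
          ?_ ?_ ?_ ?_
        · intro a ha
          have hb := (Finset.mem_filter.mp ha).1
          have h2' := (Finset.mem_filter.mp ha).2
          rw [dif_pos hb, key a hb] at h2'
          exact Finset.mem_filter.mpr ⟨Finset.mem_range.mpr (B.equivFin ⟨a, hb⟩).isLt, h2'⟩
        · intro i hi
          set b := ((B.equivFin.symm ⟨i, Finset.mem_range.mp (Finset.mem_filter.mp hi).1⟩ : {x // x ∈ B}) : V) with hbdef
          have hbB : b ∈ B := (B.equivFin.symm _).2
          refine Finset.mem_filter.mpr ⟨hbB, ?_⟩
          rw [dif_pos hbB, key b hbB]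
          have : (⟨b, hbB⟩ : {x // x ∈ B}) = B.equivFin.symm ⟨i, _⟩ := Subtype.ext rfl
          rw [this, Equiv.apply_symm_apply]
          exact (Finset.mem_filter.mp hi).2
        · intro a ha
          rw [Fin.eta, Equiv.symm_apply_apply]
        · intro i hi
          rw [Subtype.coe_eta, Equiv.apply_symm_apply]
      rw [hcard]
      exact ⟨count_mod_lower _ _ _ _ hj h1, count_mod_upper _ _ _ _ hn h2⟩

/-- if every cluster has p·n_r ≤ n_b ≤ q·n_r, there is a b-matching
with red degrees between p and q, blue degree 1, matched pairs inside clusters,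
and weight at most 2q times the disagreements. -/
theorem stmt2 {V : Type*} [Fintype V] [DecidableEq V]
    (sign : V → V → Bool) (hsym : ∀ u v, sign u v = sign v u)
    (col : V → Bool) (p q : ℕ) (hp : 1 ≤ p) (hpq : p ≤ q)
    (c : V → ℕ)
    (hfair : ∀ k,
      p * (univ.filter fun v => col v = true ∧ c v = k).card
        ≤ (univ.filter fun v => col v = false ∧ c v = k).card ∧
      (univ.filter fun v => col v = false ∧ c v = k).card
        ≤ q * (univ.filter fun v => col v = true ∧ c v = k).card) :
    ∃ f : V → V,
      (∀ b, col b = false → col (f b) = true) ∧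
      (∀ r, col r = true →
        p ≤ (univ.filter fun b => col b = false ∧ f b = r).card ∧
        (univ.filter fun b => col b = false ∧ f b = r).card ≤ q) ∧
      (∀ b, col b = false → c (f b) = c b) ∧
      ∑ b ∈ univ.filter (fun v => col v = false), pairW sign b (f b)
        ≤ 2 * q * numDis sign c := by
  classical
  have hex : ∀ k, ∃ g : V → V,
      (∀ b ∈ univ.filter (fun v => col v = false ∧ c v = k),
        g b ∈ univ.filter (fun v => col v = true ∧ c v = k)) ∧
      ∀ r ∈ univ.filter (fun v => col v = true ∧ c v = k),
        p ≤ ((univ.filter (fun v => col v = false ∧ c v = k)).filter (fun b => g b = r)).card ∧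
        ((univ.filter (fun v => col v = false ∧ c v = k)).filter (fun b => g b = r)).card ≤ q :=
    fun k => exists_assignment p q _ _ (hfair k).1 (hfair k).2
  choose g hg1 hg2 using hex
  set f : V → V := fun v => g (c v) v with hf
  have hBmem : ∀ b, col b = false → b ∈ univ.filter (fun v => col v = false ∧ c v = c b) :=
    fun b hb => Finset.mem_filter.mpr ⟨Finset.mem_univ _, hb, rfl⟩
  have hfR : ∀ b, col b = false → f b ∈ univ.filter (fun v => col v = true ∧ c v = c b) :=
    fun b hb => hg1 (c b) b (hBmem b hb)
  have hcol : ∀ b, col b = false → col (f b) = true :=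
    fun b hb => ((Finset.mem_filter.mp (hfR b hb)).2).1
  have hclus : ∀ b, col b = false → c (f b) = c b :=
    fun b hb => ((Finset.mem_filter.mp (hfR b hb)).2).2
  have hfib : ∀ r, col r = true →
      univ.filter (fun b => col b = false ∧ f b = r)
        = (univ.filter (fun v => col v = false ∧ c v = c r)).filter (fun b => g (c r) b = r) := by
    intro r hr
    ext b
    simp only [Finset.mem_filter, Finset.mem_univ, true_and]
    constructor
    · rintro ⟨hb, hfb⟩
      have hc : c b = c r := by rw [← hfb]; exact (hclus b hb).symm
      refine ⟨⟨hb, hc⟩, ?_⟩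
      rw [← hc]; exact hfb
    · rintro ⟨⟨hb, hc⟩, hgb⟩
      refine ⟨hb, ?_⟩
      show g (c b) b = r
      rw [hc]; exact hgb
  have hdeg : ∀ r, col r = true →
      p ≤ (univ.filter fun b => col b = false ∧ f b = r).card ∧
      (univ.filter fun b => col b = false ∧ f b = r).card ≤ q := by
    intro r hr
    rw [hfib r hr]
    exact hg2 (c r) r (Finset.mem_filter.mpr ⟨Finset.mem_univ _, hr, rfl⟩)
  refine ⟨f, hcol, hdeg, hclus, ?_⟩
  -- weight bound
  set Blue : Finset V := univ.filter (fun v => col v = false) with hBlue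
  set Red : Finset V := univ.filter (fun v => col v = true) with hRed
  set S : Finset (V × V) := (Finset.univ : Finset (V × V)).filter
      (fun p => p.1 ≠ p.2 ∧ isDis sign c p.1 p.2 = true) with hS
  have step1 : ∑ b ∈ Blue, pairW sign b (f b)
      ≤ ∑ b ∈ Blue, (disAt sign c b + disAt sign c (f b)) := by
    refine Finset.sum_le_sum (fun b hb => ?_)
    have hb' : col b = false := (Finset.mem_filter.mp hb).2
    have hne : b ≠ f b := by
      intro hEq
      have h1 := hcol b hb'
      rw [← hEq] at h1
      rw [h1] at hb'
      exact absurd hb' (by simp)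
    exact pairW_le_dis sign c b (f b) (hclus b hb').symm hne
  have step2 : ∑ b ∈ Blue, disAt sign c (f b) ≤ q * ∑ r ∈ Red, disAt sign c r := by
    have hmaps : ∀ b ∈ Blue, f b ∈ Red := by
      intro b hb
      have hb' : col b = false := (Finset.mem_filter.mp hb).2
      exact Finset.mem_filter.mpr ⟨Finset.mem_univ _, hcol b hb'⟩
    rw [← Finset.sum_fiberwise_of_maps_to hmaps (fun b => disAt sign c (f b))]
    rw [Finset.mul_sum]
    refine Finset.sum_le_sum (fun r hr => ?_)
    have hr' : col r = true := (Finset.mem_filter.mp hr).2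
    have hinner : ∑ b ∈ Blue.filter (fun b => f b = r), disAt sign c (f b)
        = (Blue.filter (fun b => f b = r)).card * disAt sign c r := by
      rw [Finset.sum_congr rfl (fun b hb => by
        rw [(Finset.mem_filter.mp hb).2]), Finset.sum_const, smul_eq_mul]
    rw [hinner]
    have hcq : (Blue.filter (fun b => f b = r)).card ≤ q := by
      have : Blue.filter (fun b => f b = r) = univ.filter (fun b => col b = false ∧ f b = r) := by
        rw [hBlue, Finset.filter_filter]
      rw [this]
      exact (hdeg r hr').2
    exact Nat.mul_le_mul_right _ hcq
  have hsplit : ∑ v ∈ Blue, disAt sign c v + ∑ v ∈ Red, disAt sign c v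
      = ∑ v, disAt sign c v := by
    have := Finset.sum_filter_add_sum_filter_not univ (fun v => col v = false) (disAt sign c)
    have hredeq : univ.filter (fun v => ¬ col v = false) = Red := by
      rw [hRed]
      refine Finset.filter_congr (fun v _ => ?_)
      simp
    rw [hredeq] at this
    exact this
  have hSsum : ∑ v, disAt sign c v = S.card := sum_disAt sign c
  have heven : Even S.card := by
    refine even_card_of_swap S ?_ ?_
    · intro pr hpr
      have h := Finset.mem_filter.mp hpr
      refine Finset.mem_filter.mpr ⟨Finset.mem_univ _, ?_, ?_⟩
      · exact fun hh => h.2.1 hh.symm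
      · rw [Prod.fst_swap, Prod.snd_swap, isDis_symm sign hsym]
        exact h.2.2
    · exact fun pr hpr => (Finset.mem_filter.mp hpr).2.1
  have hSnum : S.card = 2 * numDis sign c := by
    rcases heven with ⟨t, ht⟩
    have : numDis sign c = S.card / 2 := rfl
    omega
  calc ∑ b ∈ Blue, pairW sign b (f b)
      ≤ ∑ b ∈ Blue, (disAt sign c b + disAt sign c (f b)) := step1
    _ = ∑ b ∈ Blue, disAt sign c b + ∑ b ∈ Blue, disAt sign c (f b) :=
        Finset.sum_add_distrib
    _ ≤ q * ∑ v ∈ Blue, disAt sign c v + q * ∑ r ∈ Red, disAt sign c r := by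
        have h1 : ∑ b ∈ Blue, disAt sign c b ≤ q * ∑ v ∈ Blue, disAt sign c v :=
          Nat.le_mul_of_pos_left _ (by omega)
        exact Nat.add_le_add h1 step2
    _ = q * ∑ v, disAt sign c v := by rw [← Nat.mul_add, hsplit]
    _ = q * S.card := by rw [hSsum]
    _ = 2 * q * numDis sign c := by rw [hSnum]; ring
end
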